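/- Let I ⊆ R = MvPolynomial (Fin N) ℂ be an M-graded ideal, let g ∈ R be a nonzero M-homogeneous polynomial of degree d, and let m ∈ M. Then Φ_g(D_0^{m+d}(I)) = Φ_g(D_0^{m+d}(I ∩ ⟨g⟩)) = D_0^m(I : g); explicitly, for every M-homogeneous polynomial q of degree m, the following are equivalent: (a) λ_q vanishes on the ideal quotient I : ⟨g⟩; (b) there exists an M-homogeneous p of degree m + d with λ_p vanishing on I and λ_q(f) = λ_p(g·f) for all f ∈ R; (c) there exists an M-homogeneous p of degree m + d with λ_p vanishing on I ∩ ⟨g⟩ and λ_q(f) = λ_p(g·f) for all f ∈ R. -/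

import Mathlib

/-!
(b) ⇒ (c) ⇒ (a) are immediate. For (a) ⇒ (b) let `𝔪` be the ideal of the variables. By
Artin–Rees there is `k` with `(I + 𝔪^(n+k)) : g ⊆ (I : g) + 𝔪^n`, and `λ_q` kills
`𝔪^(deg q + 1)`, so `λ_q` kills `J : g` for `J = I + 𝔪^D` and some `D`. Hence `λ_q` factors
through `f ↦ g f mod J` and extends to a functional on `R ⧸ J`; a functional on `R` vanishing
on `𝔪^D` is some `λ_p`. Finally, as `I` is graded and `g`, `q` are homogeneous, the component
of `p` of degree `m + d` still has both properties.
-/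

open MvPolynomial

/-- The Macaulay pairing `λ_p(f) = ∑_α coeff(α,p) * coeff(α,f)`, as a linear functional. -/
noncomputable def lam {N : ℕ} (p : MvPolynomial (Fin N) ℂ) :
    MvPolynomial (Fin N) ℂ →ₗ[ℂ] ℂ where
  toFun f := ∑ α ∈ p.support, coeff α p * coeff α f
  map_add' f g := by simp [mul_add, Finset.sum_add_distrib]
  map_smul' c f := by
    simp [MvPolynomial.coeff_smul, Finset.mul_sum, mul_left_comm]

def IsMGraded {N : ℕ} {M : Type*} [AddCommGroup M] (w : Fin N → M)
    (I : Ideal (MvPolynomial (Fin N) ℂ)) : Prop :=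
  ∃ S : Set (MvPolynomial (Fin N) ℂ),
    (∀ s ∈ S, ∃ m : M, s.IsWeightedHomogeneous w m) ∧ I = Ideal.span S

attribute [local instance] weightedGradedAlgebra

/-- Artin–Rees for `𝔞ⁿ ⊓ (I ⊔ ⟨g⟩)`: if `g f = i + u` with `u ∈ 𝔞^(n+k)`, then
`u ∈ 𝔞ⁿ (I ⊔ ⟨g⟩)`, i.e. `u = a + v g` with `a ∈ I`, `v ∈ 𝔞ⁿ`, and `f - v ∈ I : g`. -/
theorem Ideal.exists_colon_sup_pow_le {R : Type*} [CommRing R] [IsNoetherianRing R]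
    (I 𝔞 : Ideal R) (g : R) :
    ∃ k, ∀ n, (I ⊔ 𝔞 ^ (n + k)).colon (Ideal.span {g}) ≤ I.colon (Ideal.span {g}) ⊔ 𝔞 ^ n := by
  obtain ⟨k, hk⟩ := Ideal.exists_pow_inf_eq_pow_smul 𝔞 (I ⊔ Ideal.span {g})
  simp only [Ideal.smul_eq_mul, Ideal.mul_top] at hk
  refine ⟨k, fun n f hf => ?_⟩
  obtain ⟨i, hi, u, hu, hiu⟩ := Submodule.mem_sup.mp (Ideal.mem_colon_span_singleton.mp hf)
  have hu' : u ∈ 𝔞 ^ n * I ⊔ 𝔞 ^ n * Ideal.span {g} := by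
    have hgf : u ∈ I ⊔ Ideal.span {g} := by
      rw [← add_sub_cancel_left i u, hiu]
      exact sub_mem (Ideal.mem_sup_right (Ideal.mem_span_singleton.mpr (dvd_mul_left g f)))
        (Ideal.mem_sup_left hi)
    have hmem : u ∈ 𝔞 ^ (n + k) ⊓ (I ⊔ Ideal.span {g}) := ⟨hu, hgf⟩
    rw [hk (n + k) (by omega), Nat.add_sub_cancel] at hmem
    rw [← Ideal.mul_sup]
    exact Ideal.mul_mono_right inf_le_right hmem
  obtain ⟨a, ha, b, hb, rfl⟩ := Submodule.mem_sup.mp hu'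
  obtain ⟨v, hv, rfl⟩ := Ideal.mem_mul_span_singleton.mp hb
  refine Submodule.mem_sup.mpr
    ⟨f - v, Ideal.mem_colon_span_singleton.mpr ?_, v, hv, sub_add_cancel f v⟩
  have hfv : (f - v) * g = i + a := by
    rw [sub_mul, ← hiu, ← add_assoc, add_sub_cancel_right]
  rw [hfv]
  exact add_mem hi (Ideal.mul_le_right ha)

section Pairing

variable {N : ℕ}

theorem lam_apply (p f : MvPolynomial (Fin N) ℂ) :
    lam p f = ∑ α ∈ p.support, coeff α p * coeff α f := rfl

theorem lam_eq_sum_of_support_subset (p f : MvPolynomial (Fin N) ℂ)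
    {T : Finset (Fin N →₀ ℕ)} (hT : p.support ⊆ T) :
    lam p f = ∑ α ∈ T, coeff α p * coeff α f :=
  Finset.sum_subset hT fun α _ hα => by rw [notMem_support_iff.mp hα, zero_mul]

theorem lam_monomial_one (p : MvPolynomial (Fin N) ℂ) (β : Fin N →₀ ℕ) :
    lam p (monomial β 1) = coeff β p := by
  classical
  rw [lam_eq_sum_of_support_subset p _ (Finset.subset_insert β p.support)]
  simp [coeff_monomial]

theorem lam_eq_zero_of_mem_pow_idealOfVars {q f : MvPolynomial (Fin N) ℂ} {n : ℕ}
    (hn : q.totalDegree < n) (hf : f ∈ idealOfVars (Fin N) ℂ ^ n) : lam q f = 0 :=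
  Finset.sum_eq_zero fun α hα => by
    rw [(mem_pow_idealOfVars_iff' n f).mp hf α ((le_totalDegree hα).trans_lt hn), mul_zero]

theorem exists_lam_eq_of_vanishes_on_pow_idealOfVars (φ : MvPolynomial (Fin N) ℂ →ₗ[ℂ] ℂ)
    (D : ℕ) (hφ : ∀ f ∈ idealOfVars (Fin N) ℂ ^ D, φ f = 0) : ∃ p, lam p = φ := by
  classical
  set S := (Finsupp.finite_of_degree_le (σ := Fin N) D).toFinset
  refine ⟨∑ α ∈ S, monomial α (φ (monomial α 1)), (basisMonomials (Fin N) ℂ).ext fun β => ?_⟩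
  rw [coe_basisMonomials, lam_monomial_one, coeff_sum]
  simp only [coeff_monomial, Finset.sum_ite_eq']
  split_ifs with hβ
  · rfl
  · have hDβ : D ≤ β.degree := by
      by_contra! h
      exact hβ ((Set.Finite.mem_toFinset _).mpr h.le)
    exact (hφ _ ((monomial_mem_pow_idealOfVars_iff D β one_ne_zero).mpr hDβ)).symm

theorem exists_lam_mul_eq_of_pow_idealOfVars_le {J : Ideal (MvPolynomial (Fin N) ℂ)} {D : ℕ}
    (hJ : idealOfVars (Fin N) ℂ ^ D ≤ J) {g q : MvPolynomial (Fin N) ℂ}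
    (hq : ∀ f, g * f ∈ J → lam q f = 0) :
    ∃ p, (∀ f ∈ J, lam p f = 0) ∧ ∀ f, lam p (g * f) = lam q f := by
  let π := (J.restrictScalars ℂ).mkQ
  obtain ⟨ψ, hψ⟩ : lam q ∈ LinearMap.range (π ∘ₗ LinearMap.mulLeft ℂ g).dualMap := by
    rw [LinearMap.range_dualMap_eq_dualAnnihilator_ker, Submodule.mem_dualAnnihilator]
    exact fun f hf => hq f ((Submodule.Quotient.mk_eq_zero _).mp hf)
  have hψJ : ∀ f ∈ J, (ψ ∘ₗ π) f = 0 := fun f hf => by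
    have hπf : π f = 0 := (Submodule.Quotient.mk_eq_zero _).mpr hf
    rw [LinearMap.comp_apply, hπf, map_zero]
  obtain ⟨p, hp⟩ :=
    exists_lam_eq_of_vanishes_on_pow_idealOfVars (ψ ∘ₗ π) D fun f hf => hψJ f (hJ hf)
  exact ⟨p, by rwa [hp], fun f => by rw [hp, ← hψ]; rfl⟩

theorem exists_lam_eq_zero_of_mul_mem_sup_pow {I : Ideal (MvPolynomial (Fin N) ℂ)}
    {g q : MvPolynomial (Fin N) ℂ} (hq : ∀ f ∈ I.colon (Ideal.span {g}), lam q f = 0) :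
    ∃ D, ∀ f, g * f ∈ I ⊔ idealOfVars (Fin N) ℂ ^ D → lam q f = 0 := by
  obtain ⟨k, hk⟩ := I.exists_colon_sup_pow_le (idealOfVars (Fin N) ℂ) g
  refine ⟨q.totalDegree + 1 + k, fun f hf => ?_⟩
  have hf' := hk _ (Ideal.mem_colon_span_singleton.mpr (mul_comm f g ▸ hf))
  obtain ⟨a, ha, b, hb, rfl⟩ := Submodule.mem_sup.mp hf'
  rw [map_add, hq a ha, lam_eq_zero_of_mem_pow_idealOfVars (Nat.lt_succ_self _) hb, add_zero]

section Graded

variable {M : Type*} {w : Fin N → M}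

theorem weightedHomogeneousComponent_mul_of_isWeightedHomogeneous {R : Type*} [CommSemiring R]
    [AddCancelCommMonoid M] {g : MvPolynomial (Fin N) R} {d : M}
    (hg : g.IsWeightedHomogeneous w d) (f : MvPolynomial (Fin N) R) (n : M) :
    weightedHomogeneousComponent w (d + n) (g * f) = g * weightedHomogeneousComponent w n f := by
  classical
  simp only [← weightedDecomposition.decompose'_apply]
  exact DirectSum.coe_decompose_mul_add_of_left_mem _ hg

theorem IsMGraded.isHomogeneous [AddCommGroup M] [DecidableEq M]
    {I : Ideal (MvPolynomial (Fin N) ℂ)} (hI : IsMGraded w I) :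
    I.IsHomogeneous (weightedHomogeneousSubmodule ℂ w) := by
  obtain ⟨S, hS, rfl⟩ := hI
  refine Ideal.homogeneous_span _ S fun s hs => ?_
  obtain ⟨m, hm⟩ := hS s hs
  exact ⟨m, hm⟩

theorem lam_weightedHomogeneousComponent [AddCommMonoid M] (n : M)
    (p f : MvPolynomial (Fin N) ℂ) :
    lam (weightedHomogeneousComponent w n p) f = lam p (weightedHomogeneousComponent w n f) := by
  classical
  rw [lam_eq_sum_of_support_subset _ f (support_weightedHomogeneousComponent n p ▸
    Finset.filter_subset _ _), lam_apply]
  refine Finset.sum_congr rfl fun α _ => ?_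
  simp only [coeff_weightedHomogeneousComponent]
  split_ifs <;> simp

end Graded

end Pairing

theorem dualSpace_colon_polynomial_general {N : ℕ} {M : Type*} [AddCommGroup M] (w : Fin N → M)
    (I : Ideal (MvPolynomial (Fin N) ℂ)) (hI : IsMGraded w I)
    (g : MvPolynomial (Fin N) ℂ) (d : M)
    (hg : g.IsWeightedHomogeneous w d) (m : M)
    (q : MvPolynomial (Fin N) ℂ) (hq : q.IsWeightedHomogeneous w m) :
    List.TFAE
      [ ∀ f ∈ I.colon (Ideal.span {g}), lam q f = 0,
        ∃ p : MvPolynomial (Fin N) ℂ, p.IsWeightedHomogeneous w (m + d) ∧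
          (∀ f ∈ I, lam p f = 0) ∧ ∀ f : MvPolynomial (Fin N) ℂ, lam q f = lam p (g * f),
        ∃ p : MvPolynomial (Fin N) ℂ, p.IsWeightedHomogeneous w (m + d) ∧
          (∀ f ∈ I ⊓ Ideal.span {g}, lam p f = 0) ∧
          ∀ f : MvPolynomial (Fin N) ℂ, lam q f = lam p (g * f) ] := by
  classical
  tfae_have 1 → 2 := by
    intro hq0
    obtain ⟨D, hD⟩ := exists_lam_eq_zero_of_mul_mem_sup_pow hq0
    obtain ⟨p, hpJ, hpg⟩ := exists_lam_mul_eq_of_pow_idealOfVars_le le_sup_right hD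
    refine ⟨weightedHomogeneousComponent w (m + d) p,
      weightedHomogeneousComponent_isWeightedHomogeneous _ _, fun f hf => ?_, fun f => ?_⟩
    · rw [lam_weightedHomogeneousComponent]
      exact hpJ _ (Ideal.mem_sup_left
        (weightedHomogeneousComponent_mem_of_mem ℂ w hI.isHomogeneous hf _))
    · rw [lam_weightedHomogeneousComponent, add_comm,
        weightedHomogeneousComponent_mul_of_isWeightedHomogeneous hg, hpg,
        ← lam_weightedHomogeneousComponent, weightedHomogeneousComponent_eq_self hq]
  tfae_have 2 → 3 := fun ⟨p, hp, hpI, hpq⟩ => ⟨p, hp, fun f hf => hpI f hf.1, hpq⟩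
  tfae_have 3 → 1 := by
    rintro ⟨p, -, hpIg, hpq⟩ f hf
    rw [hpq f]
    refine hpIg _ ⟨?_, Ideal.mem_span_singleton.mpr (dvd_mul_right g f)⟩
    exact mul_comm f g ▸ Ideal.mem_colon_span_singleton.mp hf
  tfae_finish

/-- **Thm. 4.1(1)**: for an `M`-graded ideal `I`, a nonzero `M`-homogeneous `g` of degree
`d`, and `m ∈ M`, `Φ_g(D_0^{m+d}(I)) = Φ_g(D_0^{m+d}(I ∩ ⟨g⟩)) = D_0^m(I : g)`: for every
`M`-homogeneous `q` of degree `m`, (a) `λ_q` vanishes on `I : ⟨g⟩`; (b) `q = Φ_g(p)` for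
some `M`-homogeneous `p` of degree `m + d` with `λ_p` vanishing on `I`; and (c)
`q = Φ_g(p)` for some `M`-homogeneous `p` of degree `m + d` with `λ_p` vanishing on
`I ∩ ⟨g⟩`, are all equivalent. -/
theorem dualSpace_colon_polynomial {N : ℕ} {M : Type*} [AddCommGroup M] (w : Fin N → M)
    (I : Ideal (MvPolynomial (Fin N) ℂ)) (hI : IsMGraded w I)
    (g : MvPolynomial (Fin N) ℂ) (hg0 : g ≠ 0) (d : M)
    (hg : g.IsWeightedHomogeneous w d) (m : M)
    (q : MvPolynomial (Fin N) ℂ) (hq : q.IsWeightedHomogeneous w m) :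
    List.TFAE
      [ ∀ f ∈ I.colon (Ideal.span {g}), lam q f = 0,
        ∃ p : MvPolynomial (Fin N) ℂ, p.IsWeightedHomogeneous w (m + d) ∧
          (∀ f ∈ I, lam p f = 0) ∧ ∀ f : MvPolynomial (Fin N) ℂ, lam q f = lam p (g * f),
        ∃ p : MvPolynomial (Fin N) ℂ, p.IsWeightedHomogeneous w (m + d) ∧
          (∀ f ∈ I ⊓ Ideal.span {g}, lam p f = 0) ∧
          ∀ f : MvPolynomial (Fin N) ℂ, lam q f = lam p (g * f) ] :=
  dualSpace_colon_polynomial_general w I hI g d hg m q hq
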